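/- If a measurable function ℓ : G → ℝ on a locally compact second countable group G is subadditive (ℓ(gh) ≤ ℓ(g) + ℓ(h)) and symmetric (ℓ(g⁻¹) = ℓ(g)) with ℓ ≥ 0, then ℓ is bounded on every compact subset of G. -/

import Mathlib

open MeasureTheory Pointwise
open scoped ENNReal

/-- Any measurable, nonnegative, symmetric, subadditive function on a locally compact
second countable group is bounded on compact subsets (logarithmic version of: any
measurable norm on a lcsc group is bounded on compact sets). -/
theorem measurable_subadditive_bounded_on_compacts
    {G : Type*} [Group G] [TopologicalSpace G] [IsTopologicalGroup G]
    [LocallyCompactSpace G] [SecondCountableTopology G]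
    [MeasurableSpace G] [BorelSpace G]
    (ℓ : G → ℝ) (hmeas : Measurable ℓ)
    (hsub : ∀ g h : G, ℓ (g * h) ≤ ℓ g + ℓ h)
    (hsymm : ∀ g : G, ℓ g⁻¹ = ℓ g)
    (hnonneg : ∀ g : G, 0 ≤ ℓ g) :
    ∀ K : Set G, IsCompact K → ∃ C : ℝ, ∀ g ∈ K, ℓ g ≤ C := by
  intro K hK
  set μ : Measure G := Measure.haar
  -- level sets
  set A : ℕ → Set G := fun n => {g | ℓ g ≤ n} with hA
  have hAmeas : ∀ n, MeasurableSet (A n) := fun n =>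
    hmeas measurableSet_Iic
  have hcover : (⋃ n, A n) = Set.univ := by
    ext g
    simp only [Set.mem_iUnion, Set.mem_univ, iff_true]
    obtain ⟨n, hn⟩ := exists_nat_ge (ℓ g)
    exact ⟨n, hn⟩
  -- some level set has positive measure
  have : ∃ n, 0 < μ (A n) := by
    by_contra h
    push_neg at h
    have h0 : ∀ n, μ (A n) = 0 := fun n => le_antisymm (h n) zero_le
    have : μ (⋃ n, A n) = 0 := measure_iUnion_null h0
    rw [hcover] at this
    have : (0 : ℝ≥0∞) < μ Set.univ := isOpen_univ.measure_pos μ ⟨1, trivial⟩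
    simp_all
  obtain ⟨n, hn⟩ := this
  -- Steinhaus: A n / A n is a neighborhood of 1
  have hV : A n / A n ∈ nhds (1 : G) :=
    MeasureTheory.Measure.div_mem_nhds_one_of_haar_pos μ (A n) (hAmeas n) hn
  -- ℓ is bounded by 2n on A n / A n
  have hVbound : ∀ v ∈ A n / A n, ℓ v ≤ 2 * n := by
    rintro v hv
    obtain ⟨a, ha, b, hb, rfl⟩ := hv
    calc ℓ (a / b) = ℓ (a * b⁻¹) := by rw [div_eq_mul_inv]
    _ ≤ ℓ a + ℓ b⁻¹ := hsub a b⁻¹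
    _ = ℓ a + ℓ b := by rw [hsymm]
    _ ≤ (n : ℝ) + n := add_le_add ha hb
    _ = 2 * n := by ring
  -- cover K by translates
  obtain ⟨t, ht⟩ := hK.elim_nhds_subcover' (fun x _ => x • (A n / A n))
    (fun x _ => by
      have : (fun y => x⁻¹ * y) ⁻¹' (A n / A n) ∈ nhds x := by
        apply (continuous_const.mul continuous_id).continuousAt.preimage_mem_nhds
        simpa using hV
      refine Filter.mem_of_superset this ?_
      intro y hy
      exact ⟨x⁻¹ * y, hy, by simp⟩)
  refine ⟨(∑ x ∈ t, ℓ x) + 2 * n, fun g hg => ?_⟩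
  have hmem := ht hg
  simp only [Set.mem_iUnion] at hmem
  obtain ⟨x, hxt, hx⟩ := hmem
  obtain ⟨y, hy, hxy⟩ := hx
  simp only [smul_eq_mul] at hxy
  calc ℓ g = ℓ ((x : G) * y) := by rw [hxy]
  _ ≤ ℓ x + ℓ y := hsub _ _
  _ ≤ (∑ z ∈ t, ℓ z) + 2 * n := by
      gcongr
      · exact Finset.single_le_sum (fun z (_ : z ∈ t) => hnonneg (z:G)) hxt
      · exact hVbound y hy
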